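/- arXiv:2303.03520 — 2 statements merged into one kernel-verified Lean document; each statement's English description precedes it below -/
import Mathlib

section
/- Double robustness of AIPTW: if either π̃_x(Z) = π_x(Z) a.s. (the working propensity score is correct) or μ̃_x(Z) = E[Y(x) | Z] a.s. (the working conditional mean is correct), then E[ 1{X=x} Y / π̃_x(Z) − (1{X=x} − π̃_x(Z)) μ̃_x(Z) / π̃_x(Z) ] = E[Y(x)]. -/
open MeasureTheory ProbabilityTheory

section AuxAIPTW

open Filter Set
open scoped NNReal Topology

/-- If `W ⊥ X | mZ` then the conditional expectation of `W · 1{X=x}` factorizes. -/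
lemma condexp_mul_indicator_of_condIndepFun
    {Ω : Type*} (mZ : MeasurableSpace Ω) [mΩ : MeasurableSpace Ω] [StandardBorelSpace Ω]
    (μ : Measure Ω) [IsProbabilityMeasure μ]
    (W : Ω → ℝ) (X : Ω → ℕ) (x : ℕ)
    (hW : Measurable W) (hX : Measurable X)
    (hmZle : mZ ≤ mΩ)
    (hNUC : CondIndepFun mZ hmZle W X μ)
    (hWint : Integrable W μ) :
    μ[fun ω => W ω * (X ⁻¹' {x}).indicator (fun _ => (1:ℝ)) ω | mZ]
      =ᵐ[μ] fun ω => (μ[W|mZ]) ω * (μ[(X ⁻¹' {x}).indicator (fun _ => (1:ℝ))|mZ]) ω := by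
  set A : Set Ω := X ⁻¹' {x} with hA_def
  have hA : MeasurableSet A := hX (measurableSet_singleton x)
  set I : Ω → ℝ := A.indicator (fun _ => (1:ℝ)) with hI_def
  have hI_meas : Measurable I := measurable_const.indicator hA
  have hI_int : Integrable I μ := (integrable_const (1:ℝ)).indicator hA
  have hI_bd : ∀ ω, ‖I ω‖ ≤ 1 := by
    intro ω
    by_cases hω : ω ∈ A <;> simp [hI_def, hω]
  set π' : Ω → ℝ := μ[I|mZ] with hπ'_def
  set m : Ω → ℝ := μ[W|mZ] with hm_def
  have hπ'_sm : StronglyMeasurable[mZ] π' := stronglyMeasurable_condExp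
  have hπ'_meas : Measurable π' := (hπ'_sm.mono hmZle).measurable
  have hπ'_aesm : AEStronglyMeasurable π' μ := (hπ'_sm.mono hmZle).aestronglyMeasurable
  have hπ'_int : Integrable π' μ := integrable_condExp
  have hm_int : Integrable m μ := integrable_condExp
  have hπ'_bd : ∀ᵐ ω ∂μ, |π' ω| ≤ ((1:ℝ≥0):ℝ) :=
    ae_bdd_condExp_of_ae_bdd (Filter.Eventually.of_forall fun ω => by
      simpa [Real.norm_eq_abs] using hI_bd ω)
  have hWI_int : Integrable (fun ω => W ω * I ω) μ := by
    refine Integrable.mono' hWint.abs ((hW.mul hI_meas).aestronglyMeasurable) ?_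
    refine Filter.Eventually.of_forall fun ω => ?_
    rw [norm_mul]
    calc ‖W ω‖ * ‖I ω‖ ≤ ‖W ω‖ * 1 := by
          exact mul_le_mul_of_nonneg_left (hI_bd ω) (norm_nonneg _)
      _ = |W ω| := by rw [mul_one, Real.norm_eq_abs]
  have hWπ'_int : Integrable (fun ω => W ω * π' ω) μ := by
    have : Integrable (fun ω => π' ω * W ω) μ := by
      refine hWint.bdd_mul (c := (1:ℝ)) hπ'_aesm ?_
      filter_upwards [hπ'_bd] with ω hb
      simpa [Real.norm_eq_abs] using hb
    exact this.congr (Filter.Eventually.of_forall fun ω => mul_comm _ _)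
  have hmπ'_int : Integrable (fun ω => m ω * π' ω) μ := by
    have : Integrable (fun ω => π' ω * m ω) μ := by
      refine hm_int.bdd_mul (c := (1:ℝ)) hπ'_aesm ?_
      filter_upwards [hπ'_bd] with ω hb
      simpa [Real.norm_eq_abs] using hb
    exact this.congr (Filter.Eventually.of_forall fun ω => mul_comm _ _)
  symm
  refine ae_eq_condExp_of_forall_setIntegral_eq hmZle hWI_int
    (fun s _ _ => hmπ'_int.integrableOn) ?_
    ((StronglyMeasurable.mul stronglyMeasurable_condExp stronglyMeasurable_condExp).aestronglyMeasurable)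
  intro s hs _
  have hs' : MeasurableSet s := hmZle _ hs
  -- Step (i): ∫_s m·π' = ∫_s π'·W
  have hpull : μ[fun ω => π' ω * W ω|mZ] =ᵐ[μ] fun ω => π' ω * m ω := by
    have := condExp_mul_of_stronglyMeasurable_left hπ'_sm
      (by exact hWπ'_int.congr (Filter.Eventually.of_forall fun ω => mul_comm (W ω) (π' ω)))
      hWint
    exact this
  have step1 : ∫ ω in s, m ω * π' ω ∂μ = ∫ ω in s, π' ω * W ω ∂μ := by
    have h1 : ∫ ω in s, m ω * π' ω ∂μ = ∫ ω in s, π' ω * m ω ∂μ := by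
      simp_rw [mul_comm]
    have h2 : ∫ ω in s, (μ[fun ω => π' ω * W ω|mZ]) ω ∂μ = ∫ ω in s, π' ω * m ω ∂μ :=
      setIntegral_congr_ae hs' (hpull.mono fun ω hω _ => hω)
    have h3 : ∫ ω in s, (μ[fun ω => π' ω * W ω|mZ]) ω ∂μ = ∫ ω in s, π' ω * W ω ∂μ :=
      setIntegral_condExp hmZle
        (hWπ'_int.congr (Filter.Eventually.of_forall fun ω => mul_comm (W ω) (π' ω))) hs
    rw [h1, ← h2, h3]
  -- Step (ii): ∫_s W·I = ∫_s W·π'  (via ∫ W · h = 0 with h = 1_s (I - π'))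
  set h : Ω → ℝ := s.indicator (fun ω => I ω - π' ω) with hh_def
  have hh_meas : Measurable h := (hI_meas.sub hπ'_meas).indicator hs'
  have hh_int : Integrable h μ := (hI_int.sub hπ'_int).indicator hs'
  have hh_bd : ∀ᵐ ω ∂μ, ‖h ω‖ ≤ 2 := by
    filter_upwards [hπ'_bd] with ω hb
    by_cases hω : ω ∈ s
    · simp only [hh_def, indicator_of_mem hω, Real.norm_eq_abs]
      calc |I ω - π' ω| ≤ |I ω| + |π' ω| := abs_sub _ _
        _ ≤ 1 + 1 := by
            refine add_le_add ?_ (by simpa using hb)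
            simpa [Real.norm_eq_abs] using hI_bd ω
        _ = 2 := by norm_num
    · simp [hh_def, indicator_of_notMem hω]
  -- key0: indicators of σ(W)-sets kill h
  have key0 : ∀ u : Set ℝ, MeasurableSet u →
      ∫ ω, (W ⁻¹' u).indicator (fun _ => (1:ℝ)) ω * h ω ∂μ = 0 := by
    intro u hu
    set B : Set Ω := W ⁻¹' u with hB_def
    have hB : MeasurableSet B := hW hu
    set IB : Ω → ℝ := B.indicator (fun _ => (1:ℝ)) with hIB_def
    have hIB_meas : Measurable IB := measurable_const.indicator hB
    have hIB_int : Integrable IB μ := (integrable_const (1:ℝ)).indicator hB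
    have hIB_bd : ∀ ω, ‖IB ω‖ ≤ 1 := by
      intro ω; by_cases hω : ω ∈ B <;> simp [hIB_def, hω]
    have hkey := (condIndepFun_iff_condExp_inter_preimage_eq_mul hW hX).mp hNUC
      u {x} hu (measurableSet_singleton x)
    -- rewrite integral over indicator of s
    have hsplit : ∫ ω, IB ω * h ω ∂μ
        = ∫ ω in s, IB ω * I ω ∂μ - ∫ ω in s, IB ω * π' ω ∂μ := by
      have e1 : (fun ω => IB ω * h ω)
          = s.indicator (fun ω => IB ω * I ω - IB ω * π' ω) := by
        funext ω
        by_cases hω : ω ∈ s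
        · simp [hh_def, indicator_of_mem hω, mul_sub]
        · simp [hh_def, indicator_of_notMem hω]
      rw [e1, integral_indicator hs']
      refine integral_sub ?_ ?_
      · exact ((hI_int.bdd_mul (c := 1) hIB_meas.aestronglyMeasurable (Filter.Eventually.of_forall hIB_bd))).integrableOn
      · exact ((hπ'_int.bdd_mul (c := 1) hIB_meas.aestronglyMeasurable (Filter.Eventually.of_forall hIB_bd))).integrableOn
    have hBA : (fun ω => IB ω * I ω) = (B ∩ A).indicator (fun _ => (1:ℝ)) := by
      funext ω
      by_cases hωB : ω ∈ B <;> by_cases hωA : ω ∈ A <;>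
        simp [hIB_def, hI_def, hωB, hωA, Set.indicator_of_mem, Set.indicator_of_notMem,
          Set.mem_inter_iff]
    have hBA_int : Integrable ((B ∩ A).indicator (fun _ => (1:ℝ))) μ :=
      (integrable_const (1:ℝ)).indicator (hB.inter hA)
    have t1 : ∫ ω in s, IB ω * I ω ∂μ
        = ∫ ω in s, (μ[(B ∩ A).indicator (fun _ => (1:ℝ))|mZ]) ω ∂μ := by
      rw [setIntegral_condExp hmZle hBA_int hs, hBA]
    have t2 : ∫ ω in s, (μ[(B ∩ A).indicator (fun _ => (1:ℝ))|mZ]) ω ∂μ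
        = ∫ ω in s, (μ[IB|mZ]) ω * π' ω ∂μ :=
      setIntegral_congr_ae hs' (hkey.mono fun ω hω _ => hω)
    have hpullB : μ[fun ω => π' ω * IB ω|mZ] =ᵐ[μ] fun ω => π' ω * (μ[IB|mZ]) ω := by
      have hint : Integrable (fun ω => π' ω * IB ω) μ := by
        refine hπ'_int.bdd_mul (c := 1) hIB_meas.aestronglyMeasurable (Filter.Eventually.of_forall hIB_bd) |>.congr ?_
        exact Filter.Eventually.of_forall fun ω => mul_comm _ _
      have := condExp_mul_of_stronglyMeasurable_left hπ'_sm (by exact hint) hIB_int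
      exact this
    have t3 : ∫ ω in s, (μ[IB|mZ]) ω * π' ω ∂μ = ∫ ω in s, π' ω * IB ω ∂μ := by
      have h1 : ∫ ω in s, (μ[IB|mZ]) ω * π' ω ∂μ = ∫ ω in s, π' ω * (μ[IB|mZ]) ω ∂μ := by
        simp_rw [mul_comm]
      have h2 : ∫ ω in s, (μ[fun ω => π' ω * IB ω|mZ]) ω ∂μ
          = ∫ ω in s, π' ω * (μ[IB|mZ]) ω ∂μ :=
        setIntegral_congr_ae hs' (hpullB.mono fun ω hω _ => hω)
      have hint : Integrable (fun ω => π' ω * IB ω) μ := by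
        refine hπ'_int.bdd_mul (c := 1) hIB_meas.aestronglyMeasurable (Filter.Eventually.of_forall hIB_bd) |>.congr ?_
        exact Filter.Eventually.of_forall fun ω => mul_comm _ _
      have h3 : ∫ ω in s, (μ[fun ω => π' ω * IB ω|mZ]) ω ∂μ = ∫ ω in s, π' ω * IB ω ∂μ :=
        setIntegral_condExp hmZle hint hs
      rw [h1, ← h2, h3]
    have t4 : ∫ ω in s, π' ω * IB ω ∂μ = ∫ ω in s, IB ω * π' ω ∂μ := by
      simp_rw [mul_comm]
    rw [hsplit, t1, t2, t3, t4, sub_self]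
  -- key2: ∫ W·h = 0 by simple-function approximation + DCT
  have key2 : ∫ ω, W ω * h ω ∂μ = 0 := by
   set mY : MeasurableSpace Ω := MeasurableSpace.comap W inferInstance with hmY_def
   have hmY_le : mY ≤ mΩ := hW.comap_le
   have key1 : ∀ φ : @SimpleFunc Ω mY ℝ, ∫ ω, φ ω * h ω ∂μ = 0 := by
    intro φ
    refine @SimpleFunc.induction Ω ℝ mY _ (fun φ => ∫ ω, φ ω * h ω ∂μ = 0) ?_ ?_ φ
    · intro c t ht
      obtain ⟨u, hu, rfl⟩ := ht
      have e : ∀ ω, (SimpleFunc.piecewise (W ⁻¹' u) (⟨u, hu, rfl⟩ : MeasurableSet[mY] _)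
          (SimpleFunc.const _ c) (SimpleFunc.const _ 0)) ω * h ω
          = c * ((W ⁻¹' u).indicator (fun _ => (1:ℝ)) ω * h ω) := by
        intro ω
        classical
        change (W ⁻¹' u).piecewise (fun _ => c) (fun _ => (0:ℝ)) ω * h ω = _
        by_cases hω : ω ∈ W ⁻¹' u <;>
          simp [SimpleFunc.piecewise_apply, hω, Set.indicator_of_mem, Set.indicator_of_notMem,
            mul_assoc, Set.piecewise_eq_of_mem, Set.piecewise_eq_of_notMem]
      simp_rw [e]
      rw [integral_const_mul, key0 u hu, mul_zero]
    · intro φ ψ _ hφ hψ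
      have hφ_int : Integrable (fun ω => φ ω * h ω) μ := by
        obtain ⟨C, hC⟩ := φ.exists_forall_norm_le
        exact hh_int.bdd_mul (c := C) ((φ.measurable.mono hmY_le le_rfl).aestronglyMeasurable) (Filter.Eventually.of_forall hC)
      have hψ_int : Integrable (fun ω => ψ ω * h ω) μ := by
        obtain ⟨C, hC⟩ := ψ.exists_forall_norm_le
        exact hh_int.bdd_mul (c := C) ((ψ.measurable.mono hmY_le le_rfl).aestronglyMeasurable) (Filter.Eventually.of_forall hC)
      have e : ∀ ω, (φ + ψ) ω * h ω = φ ω * h ω + ψ ω * h ω := by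
        intro ω
        simp [add_mul]
      simp_rw [e]
      rw [integral_add hφ_int hψ_int, hφ, hψ, add_zero]
   have hWmY : Measurable[mY] W := fun t ht => ⟨t, ht, rfl⟩
   set g : ℕ → @SimpleFunc Ω mY ℝ := fun n =>
      @SimpleFunc.approxOn ℝ Ω _ _ _ mY W hWmY Set.univ 0 (mem_univ 0) _ n with hg_def
   have hbound_int : Integrable (fun ω => (‖W ω‖ + ‖W ω‖) * 2) μ :=
      (hWint.norm.add hWint.norm).mul_const 2
   have htend : Tendsto (fun n => ∫ ω, g n ω * h ω ∂μ) atTop (𝓝 (∫ ω, W ω * h ω ∂μ)) := by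
      refine tendsto_integral_of_dominated_convergence (fun ω => (‖W ω‖ + ‖W ω‖) * 2)
        (fun n => ?_) hbound_int (fun n => ?_) ?_
      · exact (((g n).measurable.mono hmY_le le_rfl).mul hh_meas).aestronglyMeasurable
      · filter_upwards [hh_bd] with ω hb
        rw [norm_mul]
        refine mul_le_mul (SimpleFunc.norm_approxOn_zero_le hWmY (mem_univ 0) ω n) hb
          (norm_nonneg _) (by positivity)
      · refine Filter.Eventually.of_forall fun ω => ?_
        exact (SimpleFunc.tendsto_approxOn hWmY (mem_univ 0) (by simp)).mul_const _
   have hzero : (fun n => ∫ ω, g n ω * h ω ∂μ) = fun _ => (0:ℝ) :=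
      funext fun n => key1 (g n)
   rw [hzero] at htend
   exact tendsto_nhds_unique htend tendsto_const_nhds
  -- conclude step (ii)
  have step2 : ∫ ω in s, W ω * π' ω ∂μ = ∫ ω in s, W ω * I ω ∂μ := by
    have e : (fun ω => W ω * h ω) = s.indicator (fun ω => W ω * I ω - W ω * π' ω) := by
      funext ω
      by_cases hω : ω ∈ s
      · simp [hh_def, indicator_of_mem hω, mul_sub]
      · simp [hh_def, indicator_of_notMem hω]
    have := key2
    rw [e, integral_indicator hs', integral_sub hWI_int.integrableOn hWπ'_int.integrableOn]
      at this
    linarith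
  calc ∫ ω in s, m ω * π' ω ∂μ = ∫ ω in s, π' ω * W ω ∂μ := step1
    _ = ∫ ω in s, W ω * π' ω ∂μ := by simp_rw [mul_comm]
    _ = ∫ ω in s, W ω * I ω ∂μ := step2

theorem aiptw_aux
    {Ω : Type*} (mZ : MeasurableSpace Ω) [mΩ : MeasurableSpace Ω] [StandardBorelSpace Ω]
    (μ : Measure Ω) [IsProbabilityMeasure μ]
    (Y : Ω → ℝ) (X : Ω → ℕ)
    (Ypot : ℕ → Ω → ℝ) (x : ℕ)
    (hX : Measurable X)
    (hYpot : Measurable (Ypot x))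
    (hcons : ∀ ω, Y ω = Ypot (X ω) ω)
    (hmZle : mZ ≤ mΩ)
    (pix : Ω → ℝ)
    (hpix : pix =ᵐ[μ] μ[(fun ω => if X ω = x then (1 : ℝ) else 0) | mZ])
    (pit mtil : Ω → ℝ) (hpitMeas : Measurable[mZ] pit) (hmutMeas : Measurable[mZ] mtil)
    (hNUC : CondIndepFun mZ hmZle (Ypot x) X μ)
    (hpost : ∀ᵐ ω ∂μ, 0 < pit ω ∧ pit ω < 1)
    (hintYpot : Integrable (Ypot x) μ)
    (hintAIPTW : Integrable (fun ω =>
      (if X ω = x then (1 : ℝ) else 0) * Y ω / pit ω -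
        ((if X ω = x then (1 : ℝ) else 0) - pit ω) * mtil ω / pit ω) μ)
    (hdr : pit =ᵐ[μ] pix ∨ mtil =ᵐ[μ] μ[Ypot x | mZ]) :
    ∫ ω, ((if X ω = x then (1 : ℝ) else 0) * Y ω / pit ω -
        ((if X ω = x then (1 : ℝ) else 0) - pit ω) * mtil ω / pit ω) ∂μ
      = ∫ ω, Ypot x ω ∂μ := by
  set W : Ω → ℝ := Ypot x with hW_def
  set I : Ω → ℝ := fun ω => if X ω = x then (1 : ℝ) else 0 with hI_def
  set f : Ω → ℝ := fun ω => I ω * Y ω / pit ω - (I ω - pit ω) * mtil ω / pit ω with hf_def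
  have hA : MeasurableSet (X ⁻¹' {x}) := hX (measurableSet_singleton x)
  have hI_eq : I = (X ⁻¹' {x}).indicator (fun _ => (1:ℝ)) := by
    funext ω
    by_cases h : X ω = x <;> simp [hI_def, Set.indicator_apply, h]
  have hI_meas : Measurable I := by
    rw [hI_eq]; exact measurable_const.indicator hA
  have hI_int : Integrable I μ := by
    rw [hI_eq]; exact (integrable_const (1:ℝ)).indicator hA
  have hI_bd : ∀ ω, ‖I ω‖ ≤ 1 := by
    intro ω; by_cases h : X ω = x <;> simp [hI_def, h]
  have hIY : ∀ ω, I ω * Y ω = I ω * W ω := by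
    intro ω
    by_cases h : X ω = x
    · simp only [hI_def, if_pos h, one_mul, hcons ω, h, hW_def]
    · simp [hI_def, if_neg h]
  have hIW_int : Integrable (fun ω => W ω * I ω) μ := by
    refine Integrable.mono' hintYpot.abs ((hYpot.mul hI_meas).aestronglyMeasurable) ?_
    refine Filter.Eventually.of_forall fun ω => ?_
    rw [norm_mul]
    calc ‖W ω‖ * ‖I ω‖ ≤ ‖W ω‖ * 1 := mul_le_mul_of_nonneg_left (hI_bd ω) (norm_nonneg _)
      _ = |W ω| := by rw [mul_one, Real.norm_eq_abs]
  set π' : Ω → ℝ := μ[I|mZ] with hπ'_def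
  set m : Ω → ℝ := μ[W|mZ] with hm_def
  have hπ'_sm : StronglyMeasurable[mZ] π' := stronglyMeasurable_condExp
  have hπ'_aesm : AEStronglyMeasurable π' μ := (hπ'_sm.mono hmZle).aestronglyMeasurable
  have hπ'_int : Integrable π' μ := integrable_condExp
  have hm_int : Integrable m μ := integrable_condExp
  have hπ'_bd : ∀ᵐ ω ∂μ, |π' ω| ≤ ((1:ℝ≥0):ℝ) :=
    ae_bdd_condExp_of_ae_bdd (Filter.Eventually.of_forall fun ω => by
      simpa [Real.norm_eq_abs] using hI_bd ω)
  have hmπ'_int : Integrable (fun ω => m ω * π' ω) μ := by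
    have : Integrable (fun ω => π' ω * m ω) μ := by
      refine hm_int.bdd_mul (c := (1:ℝ)) hπ'_aesm ?_
      filter_upwards [hπ'_bd] with ω hb
      simpa [Real.norm_eq_abs] using hb
    exact this.congr (Filter.Eventually.of_forall fun ω => mul_comm _ _)
  -- factorization of conditional expectation
  have L1 : μ[fun ω => W ω * I ω|mZ] =ᵐ[μ] fun ω => m ω * π' ω := by
    have := condexp_mul_indicator_of_condIndepFun mZ μ W X x hYpot hX hmZle hNUC hintYpot
    rw [← hI_eq] at this
    exact this
  -- truncation sets
  set E : ℕ → Set Ω := fun n => {ω | ((n:ℝ)+1)⁻¹ ≤ pit ω ∧ |mtil ω| ≤ (n:ℝ)} with hE_def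
  have hEmZ : ∀ n, MeasurableSet[mZ] (E n) := by
    intro n
    have : E n = pit ⁻¹' (Set.Ici (((n:ℝ)+1)⁻¹)) ∩ mtil ⁻¹' (Set.Icc (-(n:ℝ)) (n:ℝ)) := by
      ext ω
      simp [hE_def, Set.mem_preimage, Set.mem_Ici, Set.mem_Icc, abs_le]
    rw [this]
    exact (hpitMeas measurableSet_Ici).inter (hmutMeas measurableSet_Icc)
  have hEmeas : ∀ n, MeasurableSet (E n) := fun n => hmZle _ (hEmZ n)
  have hEpos : ∀ n, ∀ ω ∈ E n, 0 < pit ω := by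
    intro n ω hω
    exact lt_of_lt_of_le (by positivity) hω.1
  have hEinv : ∀ n, ∀ ω ∈ E n, (pit ω)⁻¹ ≤ (n:ℝ)+1 := by
    intro n ω hω
    have h1 : (0:ℝ) < ((n:ℝ)+1)⁻¹ := by positivity
    have := inv_anti₀ h1 hω.1
    rwa [inv_inv] at this
  -- key identity per truncation level
  have keyn : ∀ n : ℕ, ∫ ω, (E n).indicator f ω ∂μ = ∫ ω, (E n).indicator m ω ∂μ := by
    intro n
    set s : Set Ω := E n with hs_def
    have hsmZ : MeasurableSet[mZ] s := hEmZ n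
    have hs' : MeasurableSet s := hEmeas n
    set g1 : Ω → ℝ := s.indicator (fun ω => (pit ω)⁻¹) with hg1_def
    set g2 : Ω → ℝ := s.indicator (fun ω => mtil ω / pit ω) with hg2_def
    set g3 : Ω → ℝ := s.indicator mtil with hg3_def
    have hg1_smZ : StronglyMeasurable[mZ] g1 :=
      (Measurable.indicator hpitMeas.inv hsmZ).stronglyMeasurable
    have hg2_smZ : StronglyMeasurable[mZ] g2 :=
      (Measurable.indicator (hmutMeas.div hpitMeas) hsmZ).stronglyMeasurable
    have hg3_smZ : StronglyMeasurable[mZ] g3 :=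
      (Measurable.indicator hmutMeas hsmZ).stronglyMeasurable
    have hg1_aesm : AEStronglyMeasurable g1 μ := (hg1_smZ.mono hmZle).aestronglyMeasurable
    have hg2_aesm : AEStronglyMeasurable g2 μ := (hg2_smZ.mono hmZle).aestronglyMeasurable
    have hg3_aesm : AEStronglyMeasurable g3 μ := (hg3_smZ.mono hmZle).aestronglyMeasurable
    have hg1_bd : ∀ ω, ‖g1 ω‖ ≤ (n:ℝ)+1 := by
      intro ω
      by_cases hω : ω ∈ s
      · rw [hg1_def, Set.indicator_of_mem hω, Real.norm_eq_abs,
          abs_of_nonneg (inv_nonneg.2 (hEpos n ω hω).le)]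
        exact hEinv n ω hω
      · simp [hg1_def, Set.indicator_of_notMem hω]
        positivity
    have hg2_bd : ∀ ω, ‖g2 ω‖ ≤ ((n:ℝ)+1) * n := by
      intro ω
      by_cases hω : ω ∈ s
      · rw [hg2_def, Set.indicator_of_mem hω, Real.norm_eq_abs, div_eq_mul_inv, abs_mul,
          abs_of_nonneg (inv_nonneg.2 (hEpos n ω hω).le), mul_comm]
        exact mul_le_mul (hEinv n ω hω) hω.2 (abs_nonneg _) (by positivity)
      · simp [hg2_def, Set.indicator_of_notMem hω]
        positivity
    have hg3_bd : ∀ ω, ‖g3 ω‖ ≤ (n:ℝ) := by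
      intro ω
      by_cases hω : ω ∈ s
      · rw [hg3_def, Set.indicator_of_mem hω, Real.norm_eq_abs]
        exact hω.2
      · simp [hg3_def, Set.indicator_of_notMem hω]
    -- pointwise splitting of the truncated integrand
    have hsplit : ∀ ω, s.indicator f ω = g1 ω * (W ω * I ω) - g2 ω * I ω + g3 ω := by
      intro ω
      by_cases hω : ω ∈ s
      · have hne : pit ω ≠ 0 := (hEpos n ω hω).ne'
        rw [Set.indicator_of_mem hω, hg1_def, hg2_def, hg3_def,
          Set.indicator_of_mem hω, Set.indicator_of_mem hω, Set.indicator_of_mem hω]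
        have hIYω := hIY ω
        linear_combination (pit ω)⁻¹ * hIYω + mtil ω * (mul_inv_cancel₀ hne)
      · simp [Set.indicator_of_notMem hω, hg1_def, hg2_def, hg3_def]
    -- integrability of the pieces
    have hg1IW_int : Integrable (fun ω => g1 ω * (W ω * I ω)) μ :=
      hIW_int.bdd_mul (c := (n:ℝ)+1) hg1_aesm (Filter.Eventually.of_forall hg1_bd)
    have hg2I_int : Integrable (fun ω => g2 ω * I ω) μ :=
      hI_int.bdd_mul (c := ((n:ℝ)+1) * n) hg2_aesm (Filter.Eventually.of_forall hg2_bd)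
    have hg3_int : Integrable g3 μ := by
      refine Integrable.mono' (integrable_const ((n:ℝ))) hg3_aesm ?_
      exact Filter.Eventually.of_forall hg3_bd
    have hg1mπ'_int : Integrable (fun ω => g1 ω * (m ω * π' ω)) μ :=
      hmπ'_int.bdd_mul (c := (n:ℝ)+1) hg1_aesm (Filter.Eventually.of_forall hg1_bd)
    have hg2π'_int : Integrable (fun ω => g2 ω * π' ω) μ :=
      hπ'_int.bdd_mul (c := ((n:ℝ)+1) * n) hg2_aesm (Filter.Eventually.of_forall hg2_bd)
    -- conditional expectation computations
    have c1 : ∫ ω, g1 ω * (W ω * I ω) ∂μ = ∫ ω, g1 ω * (m ω * π' ω) ∂μ := by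
      have hpull : μ[fun ω => g1 ω * (W ω * I ω)|mZ]
          =ᵐ[μ] fun ω => g1 ω * (μ[fun ω => W ω * I ω|mZ]) ω := by
        have := condExp_mul_of_stronglyMeasurable_left hg1_smZ
          (by exact hg1IW_int) hIW_int
        exact this
      calc ∫ ω, g1 ω * (W ω * I ω) ∂μ
          = ∫ ω, (μ[fun ω => g1 ω * (W ω * I ω)|mZ]) ω ∂μ :=
            (integral_condExp hmZle).symm
        _ = ∫ ω, g1 ω * (m ω * π' ω) ∂μ := by
            refine integral_congr_ae (hpull.trans ?_)
            filter_upwards [L1] with ω hω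
            rw [hω]
    have c2 : ∫ ω, g2 ω * I ω ∂μ = ∫ ω, g2 ω * π' ω ∂μ := by
      have hpull : μ[fun ω => g2 ω * I ω|mZ] =ᵐ[μ] fun ω => g2 ω * π' ω := by
        have := condExp_mul_of_stronglyMeasurable_left hg2_smZ (by exact hg2I_int) hI_int
        exact this
      calc ∫ ω, g2 ω * I ω ∂μ
          = ∫ ω, (μ[fun ω => g2 ω * I ω|mZ]) ω ∂μ := (integral_condExp hmZle).symm
        _ = ∫ ω, g2 ω * π' ω ∂μ := integral_congr_ae hpull
    -- assemble
    have h4 : Integrable (fun ω => g1 ω * (W ω * I ω) - g2 ω * I ω) μ :=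
      hg1IW_int.sub hg2I_int
    have h5 : Integrable (fun ω => g1 ω * (m ω * π' ω) - g2 ω * π' ω) μ :=
      hg1mπ'_int.sub hg2π'_int
    have e1a : ∫ ω, (g1 ω * (W ω * I ω) - g2 ω * I ω + g3 ω) ∂μ
        = ∫ ω, (g1 ω * (W ω * I ω) - g2 ω * I ω) ∂μ + ∫ ω, g3 ω ∂μ :=
      integral_add h4 hg3_int
    have e1b : ∫ ω, (g1 ω * (W ω * I ω) - g2 ω * I ω) ∂μ
        = ∫ ω, g1 ω * (W ω * I ω) ∂μ - ∫ ω, g2 ω * I ω ∂μ :=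
      integral_sub hg1IW_int hg2I_int
    have e2a : ∫ ω, (g1 ω * (m ω * π' ω) - g2 ω * π' ω + g3 ω) ∂μ
        = ∫ ω, (g1 ω * (m ω * π' ω) - g2 ω * π' ω) ∂μ + ∫ ω, g3 ω ∂μ :=
      integral_add h5 hg3_int
    have e2b : ∫ ω, (g1 ω * (m ω * π' ω) - g2 ω * π' ω) ∂μ
        = ∫ ω, g1 ω * (m ω * π' ω) ∂μ - ∫ ω, g2 ω * π' ω ∂μ :=
      integral_sub hg1mπ'_int hg2π'_int
    have e2 : ∫ ω, s.indicator f ω ∂μ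
        = ∫ ω, (g1 ω * (m ω * π' ω) - g2 ω * π' ω + g3 ω) ∂μ := by
      rw [show (fun ω => s.indicator f ω) = fun ω => g1 ω * (W ω * I ω) - g2 ω * I ω + g3 ω
        from funext hsplit]
      rw [e1a, e1b, c1, c2, e2a, e2b]
    rw [e2]
    refine integral_congr_ae ?_
    -- use double robustness
    rcases hdr with hdr1 | hdr2
    · have hdr1' : pit =ᵐ[μ] π' := hdr1.trans hpix
      filter_upwards [hdr1'] with ω hω
      by_cases hωs : ω ∈ s
      · have hne : pit ω ≠ 0 := (hEpos n ω hωs).ne'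
        rw [hg1_def, hg2_def, hg3_def, Set.indicator_of_mem hωs, Set.indicator_of_mem hωs,
          Set.indicator_of_mem hωs, Set.indicator_of_mem hωs, ← hω]
        field_simp [hne]
        ring
      · simp [hg1_def, hg2_def, hg3_def, Set.indicator_of_notMem hωs]
    · filter_upwards [hdr2] with ω hω
      by_cases hωs : ω ∈ s
      · have hne : pit ω ≠ 0 := (hEpos n ω hωs).ne'
        rw [hg1_def, hg2_def, hg3_def, Set.indicator_of_mem hωs, Set.indicator_of_mem hωs,
          Set.indicator_of_mem hωs, Set.indicator_of_mem hωs, hω]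
        field_simp [hne]
        ring
      · simp [hg1_def, hg2_def, hg3_def, Set.indicator_of_notMem hωs]
  -- pass to the limit
  have hae_mem : ∀ᵐ ω ∂μ, ∀ᶠ n in atTop, ω ∈ E n := by
    filter_upwards [hpost] with ω hω
    obtain ⟨N, hN⟩ := exists_nat_ge (max (pit ω)⁻¹ |mtil ω|)
    rw [Filter.eventually_atTop]
    refine ⟨N, fun n hn => ?_⟩
    have hNn : (N:ℝ) ≤ (n:ℝ) := Nat.cast_le.2 hn
    constructor
    · have h1 : (pit ω)⁻¹ ≤ (n:ℝ)+1 :=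
        le_trans (le_trans (le_max_left _ _) hN) (by linarith)
      have h2 := inv_anti₀ (inv_pos.2 hω.1) h1
      rwa [inv_inv] at h2
    · exact le_trans (le_trans (le_max_right _ _) hN) hNn
  have htend_f : Tendsto (fun n => ∫ ω, (E n).indicator f ω ∂μ) atTop (𝓝 (∫ ω, f ω ∂μ)) := by
    refine tendsto_integral_of_dominated_convergence (fun ω => ‖f ω‖)
      (fun n => hintAIPTW.aestronglyMeasurable.indicator (hEmeas n)) hintAIPTW.norm
      (fun n => Filter.Eventually.of_forall fun ω => norm_indicator_le_norm_self f ω) ?_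
    filter_upwards [hae_mem] with ω hω
    refine Tendsto.congr' ?_ tendsto_const_nhds
    filter_upwards [hω] with n hn
    rw [Set.indicator_of_mem hn]
  have htend_m : Tendsto (fun n => ∫ ω, (E n).indicator m ω ∂μ) atTop (𝓝 (∫ ω, m ω ∂μ)) := by
    refine tendsto_integral_of_dominated_convergence (fun ω => ‖m ω‖)
      (fun n => hm_int.aestronglyMeasurable.indicator (hEmeas n)) hm_int.norm
      (fun n => Filter.Eventually.of_forall fun ω => norm_indicator_le_norm_self m ω) ?_
    filter_upwards [hae_mem] with ω hω
    refine Tendsto.congr' ?_ tendsto_const_nhds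
    filter_upwards [hω] with n hn
    rw [Set.indicator_of_mem hn]
  have hfm : ∫ ω, f ω ∂μ = ∫ ω, m ω ∂μ := by
    refine tendsto_nhds_unique ?_ htend_m
    have : (fun n => ∫ ω, (E n).indicator f ω ∂μ) = fun n => ∫ ω, (E n).indicator m ω ∂μ :=
      funext keyn
    rwa [this] at htend_f
  exact hfm.trans (integral_condExp hmZle)

end AuxAIPTW



/-- Double robustness of AIPTW: if either the working propensity score
`π̃_x(Z)` is correct (`π̃_x(Z) = π_x(Z)` a.s.) or the working conditional mean `μ̃_x(Z)`
is correct (`μ̃_x(Z) = E[Y(x) | Z]` a.s.), then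
`E[ 1{X=x} Y / π̃_x(Z) − (1{X=x} − π̃_x(Z)) μ̃_x(Z) / π̃_x(Z) ] = E[Y(x)]`. -/
theorem aiptw_double_robustness
    {Ω : Type*} [mΩ : MeasurableSpace Ω] [StandardBorelSpace Ω]
    {β : Type*} [MeasurableSpace β]
    (μ : Measure Ω) [IsProbabilityMeasure μ]
    (Y : Ω → ℝ) (X : Ω → ℕ) (Z : Ω → β)
    (Ypot : ℕ → Ω → ℝ) (x : ℕ)
    (hY : Measurable Y) (hX : Measurable X) (hZ : Measurable Z)
    (hYpot : Measurable (Ypot x))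
    -- consistency: Y = Y(X)
    (hcons : ∀ ω, Y ω = Ypot (X ω) ω)
    (mZ : MeasurableSpace Ω) (hmZle : mZ ≤ mΩ)
    (hmZ : mZ = MeasurableSpace.comap Z inferInstance)
    -- true propensity score π_x(Z), a version of P(X = x | Z):
    (pix : Ω → ℝ) (hpixMeas : Measurable[mZ] pix)
    (hpix : pix =ᵐ[μ] μ[(fun ω => if X ω = x then (1 : ℝ) else 0) | mZ])
    -- working (possibly misspecified) models, measurable functions of Z:
    (pit mtil : Ω → ℝ) (hpitMeas : Measurable[mZ] pit) (hmutMeas : Measurable[mZ] mtil)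
    -- Assumption 1 (no unmeasured confounding): Y(x) ⊥ X | Z
    (hNUC : CondIndepFun mZ hmZle (Ypot x) X μ)
    -- Assumption 2 (positivity), for the true and working propensity scores:
    (hpos : ∀ᵐ ω ∂μ, 0 < pix ω ∧ pix ω < 1)
    (hpost : ∀ᵐ ω ∂μ, 0 < pit ω ∧ pit ω < 1)
    -- integrability of all relevant quantities:
    (hintY : Integrable Y μ) (hintYpot : Integrable (Ypot x) μ)
    (hintAIPTW : Integrable (fun ω =>
      (if X ω = x then (1 : ℝ) else 0) * Y ω / pit ω -
        ((if X ω = x then (1 : ℝ) else 0) - pit ω) * mtil ω / pit ω) μ)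
    -- double robustness hypothesis: one of the two working models is correct
    (hdr : pit =ᵐ[μ] pix ∨ mtil =ᵐ[μ] μ[Ypot x | mZ]) :
    ∫ ω, ((if X ω = x then (1 : ℝ) else 0) * Y ω / pit ω -
        ((if X ω = x then (1 : ℝ) else 0) - pit ω) * mtil ω / pit ω) ∂μ
      = ∫ ω, Ypot x ω ∂μ := by
  exact @aiptw_aux Ω mZ mΩ _ μ _ Y X Ypot x hX hYpot hcons hmZle pix hpix pit mtil hpitMeas
    hmutMeas hNUC hpost hintYpot hintAIPTW hdr
end

section
/- If 0 lies in the interior of the convex hull of g_1, …, g_n ∈ ℝ^k, then the constrained maximization of ∑_i log ω_i over ω_i > 0 with ∑ ω_i = 1 and ∑ ω_i g_i = 0 has a solution, and the solution is unique. -/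
open Finset Real

lemma el_exists_pos_feasible {k n : ℕ} (hn : 0 < n) (g : Fin n → (Fin k → ℝ))
    (hhull : (0 : Fin k → ℝ) ∈ interior (convexHull ℝ (Set.range g))) :
    ∃ w : Fin n → ℝ, (∀ i, 0 < w i) ∧ ∑ i, w i = 1 ∧ ∑ i, w i • g i = 0 := by
  -- get a ball around 0 inside the convex hull
  obtain ⟨ε, hε, hball⟩ := Metric.isOpen_iff.1 isOpen_interior _ hhull
  have hball' : Metric.ball (0 : Fin k → ℝ) ε ⊆ convexHull ℝ (Set.range g) :=
    hball.trans interior_subset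
  set μ : Fin k → ℝ := ∑ i, (n : ℝ)⁻¹ • g i with hμ
  set δ : ℝ := ε / (2 * (‖μ‖ + 1)) with hδ
  have hμ1 : (0:ℝ) < ‖μ‖ + 1 := by positivity
  have hδpos : 0 < δ := by positivity
  have hx : -δ • μ ∈ Metric.ball (0 : Fin k → ℝ) ε := by
    rw [Metric.mem_ball, dist_zero_right, norm_smul, norm_neg, Real.norm_of_nonneg hδpos.le]
    have h1 : δ * ‖μ‖ < δ * (‖μ‖ + 1) := by nlinarith
    have h2 : δ * (‖μ‖ + 1) = ε / 2 := by
      rw [hδ, div_mul_eq_mul_div, mul_comm 2 (‖μ‖ + 1), ← div_div, mul_div_cancel_right₀ _ hμ1.ne']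
    linarith
  have hxhull := hball' hx
  rw [convexHull_range_eq_exists_affineCombination] at hxhull
  obtain ⟨s, a, ha0, ha1, hax⟩ := hxhull
  rw [s.affineCombination_eq_linear_combination _ _ ha1] at hax
  set b : Fin n → ℝ := fun i => if i ∈ s then a i else 0 with hb
  have hb0 : ∀ i, 0 ≤ b i := by
    intro i; simp only [hb]; split
    · exact ha0 _ ‹_›
    · exact le_rfl
  have hb1 : ∑ i, b i = 1 := by
    rw [← ha1]; rw [Finset.sum_ite_mem]; simp
  have hbx : ∑ i, b i • g i = -δ • μ := by
    rw [← hax]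
    rw [← Finset.sum_subset (Finset.subset_univ s)
      (fun i _ hi => by simp [hb, hi] : ∀ i ∈ Finset.univ, i ∉ s → b i • g i = 0)]
    exact Finset.sum_congr rfl fun i hi => by simp [hb, hi]
  -- combine
  set c : ℝ := 1 / (1 + δ) with hc
  set d : ℝ := δ / (1 + δ) with hd
  have hcpos : 0 < c := by positivity
  have hdpos : 0 < d := by positivity
  have hcd : c + d = 1 := by rw [hc, hd, ← add_div, div_self (by positivity)]
  refine ⟨fun i => c * b i + d * (n : ℝ)⁻¹, ?_, ?_, ?_⟩
  · intro i
    have : 0 < d * (n : ℝ)⁻¹ := by positivity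
    nlinarith [hb0 i]
  · have hsum : ∑ i : Fin n, (c * b i + d * (n : ℝ)⁻¹)
        = c * (∑ i, b i) + d * ((n:ℝ) * (n:ℝ)⁻¹) := by
      rw [Finset.sum_add_distrib, ← Finset.mul_sum, ← Finset.mul_sum]
      simp [Finset.card_univ]
    rw [hsum, hb1, mul_inv_cancel₀ (by positivity : (n:ℝ) ≠ 0), mul_one, mul_one, hcd]
  · have : ∀ i, (c * b i + d * (n : ℝ)⁻¹) • g i
        = c • (b i • g i) + d • ((n : ℝ)⁻¹ • g i) := by
      intro i; rw [add_smul, smul_smul, smul_smul]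
    simp_rw [this]
    rw [Finset.sum_add_distrib, ← Finset.smul_sum, ← Finset.smul_sum, hbx, ← hμ]
    rw [smul_smul]
    rw [← add_smul]
    have : c * -δ + d = 0 := by rw [hc, hd]; ring
    rw [this, zero_smul]

/-- If `0` lies in the interior of the convex hull of
`g_1, …, g_n ∈ ℝ^k` (with `n > k`), then the constrained maximization of `∑_i log ω_i`
over `ω_i > 0` with `∑ ω_i = 1` and `∑ ω_i g_i = 0` has a solution, and the solution is
unique. -/
theorem empirical_likelihood_exists_unique
    {k n : ℕ} (hnk : k < n) (g : Fin n → (Fin k → ℝ))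
    (hhull : (0 : Fin k → ℝ) ∈ interior (convexHull ℝ (Set.range g))) :
    ∃! w : Fin n → ℝ,
      ((∀ i, 0 < w i) ∧ ∑ i, w i = 1 ∧ ∑ i, w i • g i = 0) ∧
      ∀ w' : Fin n → ℝ, (∀ i, 0 < w' i) → ∑ i, w' i = 1 → ∑ i, w' i • g i = 0 →
        ∑ i, Real.log (w' i) ≤ ∑ i, Real.log (w i) := by
  have hn : 0 < n := lt_of_le_of_lt (Nat.zero_le k) hnk
  obtain ⟨w₀, hw₀pos, hw₀1, hw₀g⟩ := el_exists_pos_feasible hn g hhull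
  set K : Set (Fin n → ℝ) :=
    {w | (∀ i, 0 ≤ w i) ∧ ∑ i, w i = 1 ∧ ∑ i, w i • g i = 0} with hK
  have hw₀K : w₀ ∈ K := ⟨fun i => (hw₀pos i).le, hw₀1, hw₀g⟩
  have hKclosed : IsClosed K := by
    have h1 : IsClosed {w : Fin n → ℝ | ∀ i, 0 ≤ w i} := by
      have he : {w : Fin n → ℝ | ∀ i, 0 ≤ w i} = ⋂ i, {w : Fin n → ℝ | 0 ≤ w i} := by
        ext w; simp
      rw [he]
      exact isClosed_iInter fun i => isClosed_le continuous_const (continuous_apply i)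
    have h2 : IsClosed {w : Fin n → ℝ | ∑ i, w i = 1} :=
      isClosed_eq (by continuity) continuous_const
    have h3 : IsClosed {w : Fin n → ℝ | ∑ i, w i • g i = 0} := by
      refine isClosed_eq ?_ continuous_const
      exact continuous_finset_sum _ fun i _ => (continuous_apply i).smul continuous_const
    have : K = {w : Fin n → ℝ | ∀ i, 0 ≤ w i} ∩
        ({w : Fin n → ℝ | ∑ i, w i = 1} ∩ {w : Fin n → ℝ | ∑ i, w i • g i = 0}) := by
      ext w; simp [hK, and_assoc]
    rw [this]
    exact h1.inter (h2.inter h3)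
  have hKcompact : IsCompact K := by
    refine IsCompact.of_isClosed_subset (isCompact_Icc : IsCompact (Set.Icc (0 : Fin n → ℝ) 1))
      hKclosed ?_
    rintro w ⟨hpos, hsum, -⟩
    constructor
    · intro i; exact hpos i
    · intro i
      calc w i ≤ ∑ j, w j := Finset.single_le_sum (fun j _ => hpos j) (Finset.mem_univ i)
        _ = 1 := hsum
  -- maximize the product
  have hfcont : Continuous (fun w : Fin n → ℝ => ∏ i, w i) :=
    continuous_finset_prod _ fun i _ => continuous_apply i
  obtain ⟨w, hwK, hwmax⟩ := hKcompact.exists_isMaxOn ⟨w₀, hw₀K⟩ hfcont.continuousOn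
  obtain ⟨hwnn, hw1, hwg⟩ := hwK
  have hprod₀ : 0 < ∏ i, w₀ i := Finset.prod_pos fun i _ => hw₀pos i
  have hprodw : 0 < ∏ i, w i := lt_of_lt_of_le hprod₀ (hwmax hw₀K)
  have hwpos : ∀ i, 0 < w i := by
    intro i
    rcases (hwnn i).lt_or_eq with h | h
    · exact h
    · exfalso
      have : ∏ j, w j = 0 := Finset.prod_eq_zero (Finset.mem_univ i) h.symm
      rw [this] at hprodw; exact lt_irrefl 0 hprodw
  -- log maximality
  have hlogmax : ∀ w' : Fin n → ℝ, (∀ i, 0 < w' i) → ∑ i, w' i = 1 →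
      ∑ i, w' i • g i = 0 → ∑ i, Real.log (w' i) ≤ ∑ i, Real.log (w i) := by
    intro w' hpos' h1' hg'
    have hK' : w' ∈ K := ⟨fun i => (hpos' i).le, h1', hg'⟩
    have hle : ∏ i, w' i ≤ ∏ i, w i := hwmax hK'
    have hprod' : 0 < ∏ i, w' i := Finset.prod_pos fun i _ => hpos' i
    calc ∑ i, Real.log (w' i) = Real.log (∏ i, w' i) :=
          (Real.log_prod fun i _ => (hpos' i).ne').symm
      _ ≤ Real.log (∏ i, w i) := Real.log_le_log hprod' hle
      _ = ∑ i, Real.log (w i) := Real.log_prod fun i _ => (hwpos i).ne'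
  refine ⟨w, ⟨⟨hwpos, hw1, hwg⟩, hlogmax⟩, ?_⟩
  -- uniqueness
  rintro y ⟨⟨hypos, hy1, hyg⟩, hymax⟩
  by_contra hne
  obtain ⟨i₀, hi₀⟩ := Function.ne_iff.1 hne
  set m : Fin n → ℝ := fun i => (y i + w i) / 2 with hm
  have hmpos : ∀ i, 0 < m i := fun i => by
    have := hypos i; have := hwpos i; simp only [hm]; positivity
  have hm1 : ∑ i, m i = 1 := by
    simp only [hm]
    rw [← Finset.sum_div, Finset.sum_add_distrib, hy1, hw1]
    norm_num
  have hmg : ∑ i, m i • g i = 0 := by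
    have : ∀ i, m i • g i = (2⁻¹ : ℝ) • (y i • g i) + (2⁻¹ : ℝ) • (w i • g i) := by
      intro i
      simp only [hm]
      rw [smul_smul, smul_smul, ← add_smul]
      ring_nf
    simp_rw [this]
    rw [Finset.sum_add_distrib, ← Finset.smul_sum, ← Finset.smul_sum, hyg, hwg]
    simp
  -- equal objective values
  have heq : ∑ i, Real.log (y i) = ∑ i, Real.log (w i) :=
    le_antisymm (hlogmax y hypos hy1 hyg) (hymax w hwpos hw1 hwg)
  -- strict concavity contradiction
  have hstrict : ∑ i, (2⁻¹ * Real.log (y i) + 2⁻¹ * Real.log (w i))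
      < ∑ i, Real.log (m i) := by
    apply Finset.sum_lt_sum
    · intro i _
      rcases eq_or_ne (y i) (w i) with h | h
      · simp only [hm, h]
        have : (w i + w i) / 2 = w i := by ring
        rw [this]; ring_nf; exact le_rfl
      · have := strictConcaveOn_log_Ioi.2 (Set.mem_Ioi.2 (hypos i))
          (Set.mem_Ioi.2 (hwpos i)) h (by norm_num : (0:ℝ) < 2⁻¹)
          (by norm_num : (0:ℝ) < 2⁻¹) (by norm_num)
        simp only [smul_eq_mul] at this
        have hmi : m i = 2⁻¹ * y i + 2⁻¹ * w i := by simp only [hm]; ring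
        rw [hmi]
        exact this.le
    · refine ⟨i₀, Finset.mem_univ i₀, ?_⟩
      have := strictConcaveOn_log_Ioi.2 (Set.mem_Ioi.2 (hypos i₀))
        (Set.mem_Ioi.2 (hwpos i₀)) hi₀ (by norm_num : (0:ℝ) < 2⁻¹)
        (by norm_num : (0:ℝ) < 2⁻¹) (by norm_num)
      simp only [smul_eq_mul] at this
      have hmi : m i₀ = 2⁻¹ * y i₀ + 2⁻¹ * w i₀ := by simp only [hm]; ring
      rw [hmi]
      exact this
  have hlhs : ∑ i, (2⁻¹ * Real.log (y i) + 2⁻¹ * Real.log (w i))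
      = ∑ i, Real.log (w i) := by
    rw [Finset.sum_add_distrib, ← Finset.mul_sum, ← Finset.mul_sum, heq]
    ring
  have hcontra := hlogmax m hmpos hm1 hmg
  rw [hlhs] at hstrict
  linarith
end
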